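/- (Appendix B, closure statement.) Let w : ℝⁿ → (0,∞) satisfy w(x) ≤ B·exp(−b|x|²) for all x ∈ ℝⁿ, with constants B, b > 0. Then for every k ∈ ℝⁿ the function x ↦ exp(i k·x) lies in the closure of the algebra of polynomial functions on ℝⁿ with respect to the seminorm ‖f‖_w = sup_{x∈ℝⁿ} |f(x)|·w(x); explicitly, sup_{x∈ℝⁿ} |exp(i k·x) − Σ_{n=0}^{N} (i k·x)^n/n!|·w(x) → 0 as N → ∞. -/

import Mathlib

/-! The Taylor remainder of `exp` at `z` is at most `‖z‖ ^ M / M! * exp ‖z‖`. With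
`z = i⟪k, x⟫`, `c = ‖k‖` and `s = ‖x‖`, writing `c s = q (c + 1) s` with
`q = c / (c + 1) < 1` and using `t ^ M / M! ≤ exp t` bounds the weighted remainder by
`q ^ M · B · exp ((2c + 1) s - b s²) ≤ q ^ M · B · exp ((2c + 1)² / 4b)`,
uniformly in `x`. -/

open scoped RealInnerProductSpace
open Finset

lemma Real.pow_add_div_factorial_le (r : ℝ) (hr : 0 ≤ r) (n i : ℕ) :
    r ^ (i + n) / (i + n).factorial ≤ r ^ n / n.factorial * (r ^ i / i.factorial) := by
  have hfac : ((i.factorial * n.factorial : ℕ) : ℝ) ≤ (i + n).factorial := by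
    exact_mod_cast Nat.le_of_dvd (Nat.factorial_pos _)
      (Nat.factorial_mul_factorial_dvd_factorial_add i n)
  calc r ^ (i + n) / (i + n).factorial
      ≤ r ^ (i + n) / ((i.factorial * n.factorial : ℕ) : ℝ) := by gcongr
    _ = r ^ n / n.factorial * (r ^ i / i.factorial) := by push_cast; ring

lemma Real.exp_sub_sum_le_pow_div_factorial_mul_exp (r : ℝ) (hr : 0 ≤ r) (n : ℕ) :
    Real.exp r - ∑ m ∈ range n, r ^ m / m.factorial ≤ r ^ n / n.factorial * Real.exp r := by
  have hexp : HasSum (fun m : ℕ => r ^ m / m.factorial) (Real.exp r) := by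
    simpa [Real.exp_eq_exp_ℝ] using NormedSpace.expSeries_div_hasSum_exp r
  have htail : HasSum (fun i : ℕ => r ^ (i + n) / (i + n).factorial)
      (Real.exp r - ∑ m ∈ range n, r ^ m / m.factorial) :=
    (hasSum_nat_add_iff' n).mpr hexp
  exact hasSum_le (Real.pow_add_div_factorial_le r hr n) htail (hexp.mul_left _)

lemma Complex.norm_exp_sub_sum_le_pow_div_factorial_mul_exp (z : ℂ) (n : ℕ) :
    ‖Complex.exp z - ∑ m ∈ range n, z ^ m / m.factorial‖ ≤
      ‖z‖ ^ n / n.factorial * Real.exp ‖z‖ :=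
  (Complex.norm_exp_sub_sum_le_exp_norm_sub_sum z n).trans
    (Real.exp_sub_sum_le_pow_div_factorial_mul_exp _ (norm_nonneg z) n)

lemma Real.mul_sub_mul_sq_le {b : ℝ} (hb : 0 < b) (a s : ℝ) :
    a * s - b * s ^ 2 ≤ a ^ 2 / (4 * b) := by
  rw [le_div_iff₀ (by positivity)]
  nlinarith [sq_nonneg (a - 2 * b * s)]

lemma Real.pow_div_factorial_mul_exp_mul_exp_neg_sq_le {b c s : ℝ} (hb : 0 < b) (hc : 0 ≤ c)
    (hs : 0 ≤ s) (M : ℕ) :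
    (c * s) ^ M / M.factorial * Real.exp (c * s) * Real.exp (-b * s ^ 2) ≤
      Real.exp ((2 * c + 1) ^ 2 / (4 * b)) * (c / (c + 1)) ^ M := by
  have hgeom : (c * s) ^ M / M.factorial ≤ (c / (c + 1)) ^ M * Real.exp ((c + 1) * s) := by
    have hsplit : c * s = c / (c + 1) * ((c + 1) * s) := by field_simp
    rw [hsplit, mul_pow, mul_div_assoc]
    gcongr
    exact Real.pow_div_factorial_le_exp _ (by positivity) M
  calc (c * s) ^ M / M.factorial * Real.exp (c * s) * Real.exp (-b * s ^ 2)
      ≤ (c / (c + 1)) ^ M * Real.exp ((c + 1) * s) * Real.exp (c * s) *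
          Real.exp (-b * s ^ 2) := by
        gcongr
    _ = Real.exp ((2 * c + 1) * s - b * s ^ 2) * (c / (c + 1)) ^ M := by
        rw [mul_assoc _ (Real.exp _), mul_assoc, ← Real.exp_add, ← Real.exp_add]
        ring_nf
    _ ≤ Real.exp ((2 * c + 1) ^ 2 / (4 * b)) * (c / (c + 1)) ^ M := by
        gcongr
        exact Real.mul_sub_mul_sq_le hb _ _

section InnerProductSpace

variable {E : Type*} [NormedAddCommGroup E] [InnerProductSpace ℝ E]

lemma norm_exp_I_inner_sub_sum_mul_exp_neg_sq_le {b : ℝ} (hb : 0 < b) (k x : E) (M : ℕ) :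
    ‖Complex.exp (Complex.I * ((⟪k, x⟫ : ℝ) : ℂ)) -
        ∑ m ∈ range M, (Complex.I * ((⟪k, x⟫ : ℝ) : ℂ)) ^ m / (m.factorial : ℂ)‖ *
        Real.exp (-b * ‖x‖ ^ 2) ≤
      Real.exp ((2 * ‖k‖ + 1) ^ 2 / (4 * b)) * (‖k‖ / (‖k‖ + 1)) ^ M := by
  set z : ℂ := Complex.I * ((⟪k, x⟫ : ℝ) : ℂ)
  have hz : ‖z‖ ≤ ‖k‖ * ‖x‖ := by
    simpa [z] using abs_real_inner_le_norm k x
  calc _ ≤ ‖z‖ ^ M / M.factorial * Real.exp ‖z‖ * Real.exp (-b * ‖x‖ ^ 2) := by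
        gcongr
        exact Complex.norm_exp_sub_sum_le_pow_div_factorial_mul_exp z M
    _ ≤ (‖k‖ * ‖x‖) ^ M / M.factorial * Real.exp (‖k‖ * ‖x‖) *
          Real.exp (-b * ‖x‖ ^ 2) := by
        gcongr
    _ ≤ _ := Real.pow_div_factorial_mul_exp_mul_exp_neg_sq_le hb (norm_nonneg k) (norm_nonneg x) M

end InnerProductSpace

theorem plane_wave_in_closure_of_polynomials_general {n : ℕ}
    (w : EuclideanSpace ℝ (Fin n) → ℝ)
    (B b : ℝ) (hb : 0 < b)
    (hw_pos : ∀ x, 0 < w x)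
    (hw : ∀ x, w x ≤ B * Real.exp (-b * ‖x‖ ^ 2))
    (k : EuclideanSpace ℝ (Fin n)) :
    Filter.Tendsto (fun N : ℕ => ⨆ x : EuclideanSpace ℝ (Fin n),
        ‖Complex.exp (Complex.I * ((⟪k, x⟫ : ℝ) : ℂ)) -
            ∑ m ∈ Finset.range (N + 1),
              (Complex.I * ((⟪k, x⟫ : ℝ) : ℂ)) ^ m / (m.factorial : ℂ)‖ * w x)
      Filter.atTop (nhds 0) := by
  set K := B * Real.exp ((2 * ‖k‖ + 1) ^ 2 / (4 * b))
  set q := ‖k‖ / (‖k‖ + 1)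
  have hB : 0 ≤ B := nonneg_of_mul_nonneg_left ((hw_pos 0).le.trans (hw 0)) (Real.exp_pos _)
  have hbound : ∀ (N : ℕ) x, ‖Complex.exp (Complex.I * ((⟪k, x⟫ : ℝ) : ℂ)) -
        ∑ m ∈ Finset.range (N + 1),
          (Complex.I * ((⟪k, x⟫ : ℝ) : ℂ)) ^ m / (m.factorial : ℂ)‖ * w x
        ≤ K * q ^ (N + 1) := fun N x =>
    calc _ ≤ _ * (B * Real.exp (-b * ‖x‖ ^ 2)) := by gcongr; exact hw x
      _ = B * (_ * Real.exp (-b * ‖x‖ ^ 2)) := by ring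
      _ ≤ K * q ^ (N + 1) := by
        rw [mul_assoc]
        exact mul_le_mul_of_nonneg_left
          (norm_exp_I_inner_sub_sum_mul_exp_neg_sq_le hb k x (N + 1)) hB
  have hq : q < 1 := (div_lt_one (by positivity)).mpr (lt_add_one _)
  have hlim : Filter.Tendsto (fun N : ℕ => K * q ^ (N + 1)) Filter.atTop (nhds 0) := by
    simpa using ((tendsto_pow_atTop_nhds_zero_of_lt_one (by positivity) hq).comp
      (Filter.tendsto_add_atTop_nat 1)).const_mul K
  refine squeeze_zero (fun N => ?_) (fun N => ciSup_le (hbound N)) hlim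
  exact Real.iSup_nonneg fun x => mul_nonneg (norm_nonneg _) (hw_pos x).le

/-- Appendix B, closure statement: if `w(x) ≤ B e^{−b|x|²}` with
`B, b > 0`, then for every `k ∈ ℝⁿ` the plane wave `x ↦ e^{i k·x}` lies in the
closure of the polynomials in the `w`-weighted supremum seminorm: the weighted
sup distance to the Taylor polynomials tends to `0` as `N → ∞`. -/
theorem plane_wave_in_closure_of_polynomials {n : ℕ}
    (w : EuclideanSpace ℝ (Fin n) → ℝ)
    (B b : ℝ) (hB : 0 < B) (hb : 0 < b)
    (hw_pos : ∀ x, 0 < w x)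
    (hw : ∀ x, w x ≤ B * Real.exp (-b * ‖x‖ ^ 2))
    (k : EuclideanSpace ℝ (Fin n)) :
    Filter.Tendsto (fun N : ℕ => ⨆ x : EuclideanSpace ℝ (Fin n),
        ‖Complex.exp (Complex.I * ((⟪k, x⟫ : ℝ) : ℂ)) -
            ∑ m ∈ Finset.range (N + 1),
              (Complex.I * ((⟪k, x⟫ : ℝ) : ℂ)) ^ m / (m.factorial : ℂ)‖ * w x)
      Filter.atTop (nhds 0) :=
  plane_wave_in_closure_of_polynomials_general w B b hb hw_pos hw k
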